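/- arXiv:1211.0269 — 4 statements merged into one kernel-verified Lean document; each statement's English description precedes it below -/
import Mathlib

section
/- For a closed spin 8-manifold X with signature σ(X) and first spin Pontryagin square p_X² = ⟨p_X ∪ p_X,[X]⟩, one has p_X² − σ(X) = 224·Â(X). Consequently, if σ(X) = 0 (e.g. X a mapping torus) then 224 divides p_X². -/
-- With `p₁ = 2p`, the two quotients are the signature `∫L` and `Â`; `p₂` cancels.
theorem sq_sub_signature_eq_224_mul_aHat {K : Type*} [Field K] [CharZero K] (p p₂ : K) :
    p ^ 2 - (7 * p₂ - (2 * p) ^ 2) / 45 = 224 * ((7 * (2 * p) ^ 2 - 4 * p₂) / 5760) := by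
  ring

/-- For a closed spin 8-manifold with half-Pontryagin class `p` (so `p₁ = 2p`),
signature `σ = ∫L = (7p₂ − p₁²)/45` and `Â = (7p₁² − 4p₂)/5760`, one has
`p² − σ = 224·Â`; consequently, if `σ = 0` (e.g. a mapping torus) then
`224 ∣ p²`. -/
theorem p_sq_sub_sigma_eq_224_Ahat (p σ A : ℤ) (p2 : ℚ)
    (hA : (A : ℚ) = (7 * ((2 * p : ℤ) : ℚ) ^ 2 - 4 * p2) / 5760)
    (hσ : (σ : ℚ) = (7 * p2 - ((2 * p : ℤ) : ℚ) ^ 2) / 45) :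
    p ^ 2 - σ = 224 * A ∧ (σ = 0 → (224 : ℤ) ∣ p ^ 2) := by
  have key : p ^ 2 - σ = 224 * A := by
    have hℚ : ((p ^ 2 - σ : ℤ) : ℚ) = ((224 * A : ℤ) : ℚ) := by
      push_cast at hA hσ ⊢
      rw [hA, hσ]
      exact sq_sub_signature_eq_224_mul_aHat (p : ℚ) p2
    exact_mod_cast hℚ
  refine ⟨key, fun hσ₀ => ⟨A, ?_⟩⟩
  rwa [hσ₀, sub_zero] at key
end

section
/- Let W be a 4-manifold-datum with Euler characteristic χ(W) and semicharacteristic χ₂(Y) of its boundary, and suppose (i) χ(W) ≡ dim H²₀(W;𝔽₂) + χ₂(Y) mod 2 (from the exact sequence), and (ii) H²₀(W;𝔽₂) carries a nondegenerate even symmetric 𝔽₂-bilinear form. Then χ(W) ≡ χ₂(Y) mod 2. -/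
/-!
A nondegenerate alternating form splits off a hyperbolic plane: if `B x y ≠ 0`, then `B` is
nondegenerate on `span {x, y}`, hence also on its orthogonal complement, which has dimension two
less. By induction the dimension is even, and then the parity identity gives `χ ≡ χ₂`.
-/

open Module

namespace LinearMap.BilinForm

variable {K V : Type*} [Field K] [AddCommGroup V] [Module K V] {B : LinearMap.BilinForm K V}

theorem eq_zero_of_isAlt_of_apply_combination_eq_zero (hB : B.IsAlt) {x y : V}
    (hxy : B x y ≠ 0) {s t : K} (hx : B (s • x + t • y) x = 0) (hy : B (s • x + t • y) y = 0) :
    s = 0 ∧ t = 0 := by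
  have hyx : B y x = -B x y := (hB.neg_eq x y).symm
  simp only [map_add, map_smul, LinearMap.add_apply, LinearMap.smul_apply, smul_eq_mul] at hx hy
  rw [hB.self_eq_zero, hyx] at hx
  rw [hB.self_eq_zero] at hy
  exact ⟨by simpa [hxy] using hy, by simpa [hxy] using hx⟩

theorem linearIndependent_pair_of_isAlt (hB : B.IsAlt) {x y : V} (hxy : B x y ≠ 0) :
    LinearIndependent K ![x, y] :=
  LinearIndependent.pair_iff.mpr fun _ _ h ↦
    eq_zero_of_isAlt_of_apply_combination_eq_zero hB hxy (by simp [h]) (by simp [h])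

theorem restrict_span_pair_nondegenerate_of_isAlt (hB : B.IsAlt) {x y : V} (hxy : B x y ≠ 0) :
    (B.restrict (Submodule.span K {x, y})).Nondegenerate := by
  have hrefl : (B.restrict (Submodule.span K {x, y})).IsRefl := fun a b ↦ hB.isRefl a b
  refine hrefl.nondegenerate_iff_separatingLeft.mpr ?_
  rintro ⟨z, hz⟩ hzW
  obtain ⟨s, t, rfl⟩ := Submodule.mem_span_pair.mp hz
  obtain ⟨rfl, rfl⟩ := eq_zero_of_isAlt_of_apply_combination_eq_zero hB hxy
    (hzW ⟨x, Submodule.subset_span (by simp)⟩) (hzW ⟨y, Submodule.subset_span (by simp)⟩)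
  simp

theorem restrict_orthogonal_nondegenerate [FiniteDimensional K V] (hB : B.Nondegenerate)
    (hrefl : B.IsRefl) {W : Submodule K V} (hW : (B.restrict W).Nondegenerate) :
    (B.restrict (B.orthogonal W)).Nondegenerate := by
  refine B.nondegenerate_restrict_of_disjoint_orthogonal hrefl ?_
  rw [orthogonal_orthogonal hB hrefl]
  exact (isCompl_orthogonal_of_restrict_nondegenerate hrefl hW).symm.disjoint

theorem even_finrank_of_isAlt_of_nondegenerate [FiniteDimensional K V] (hB : B.IsAlt)
    (hnd : B.Nondegenerate) : Even (finrank K V) := by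
  induction hn : finrank K V using Nat.strong_induction_on generalizing V with
  | _ n ih =>
  rcases eq_or_ne n 0 with rfl | hn0
  · exact .zero
  have : Nontrivial V := (finrank_pos_iff (R := K)).mp (by omega)
  obtain ⟨x, hx⟩ := exists_ne (0 : V)
  obtain ⟨y, hxy⟩ : ∃ y, B x y ≠ 0 := by
    by_contra! h
    exact hx (hnd.1 x h)
  set P := Submodule.span K {x, y}
  have hP : (B.restrict P).Nondegenerate := restrict_span_pair_nondegenerate_of_isAlt hB hxy
  have hP2 : finrank K P = 2 := by
    have := finrank_span_eq_card (linearIndependent_pair_of_isAlt hB hxy)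
    rw [Matrix.range_cons_cons_empty] at this
    simpa using this
  have hsum : finrank K P + finrank K (B.orthogonal P) = n := by
    rw [← hn, Submodule.finrank_add_eq_of_isCompl
      (isCompl_orthogonal_of_restrict_nondegenerate hB.isRefl hP)]
  obtain ⟨k, hk⟩ := ih _ (by omega) (B := B.restrict (B.orthogonal P)) (fun z ↦ hB z)
    (restrict_orthogonal_nondegenerate hnd hB.isRefl hP) rfl
  exact ⟨k + 1, by omega⟩

end LinearMap.BilinForm

theorem chi_congr_semichar_mod_two_general (χ χ₂ : ℤ)
    {V : Type*} [AddCommGroup V] [Module (ZMod 2) V]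
    [FiniteDimensional (ZMod 2) V]
    (B : V →ₗ[ZMod 2] V →ₗ[ZMod 2] ZMod 2)
    (halt : ∀ x : V, B x x = 0)
    (hnondeg : ∀ x : V, (∀ y : V, B x y = 0) → x = 0)
    (hparity : χ ≡ (Module.finrank (ZMod 2) V : ℤ) + χ₂ [ZMOD 2]) :
    χ ≡ χ₂ [ZMOD 2] := by
  have hB : B.IsAlt := halt
  have hrank : Even (finrank (ZMod 2) V : ℤ) :=
    (Int.even_coe_nat _).mpr <| LinearMap.BilinForm.even_finrank_of_isAlt_of_nondegenerate hB
      (hB.isRefl.nondegenerate_iff_separatingLeft.mpr hnondeg)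
  have hzero : (finrank (ZMod 2) V : ℤ) ≡ 0 [ZMOD 2] :=
    Int.modEq_zero_iff_dvd.mpr (even_iff_two_dvd.mp hrank)
  simpa using hparity.trans (hzero.add_right χ₂)

/-- Lemma 4.2: if `χ(W) ≡ dim H²₀(W;𝔽₂) + χ₂(Y) (mod 2)` and `H²₀(W;𝔽₂)`
carries a nondegenerate even symmetric 𝔽₂-bilinear form, then
`χ(W) ≡ χ₂(Y) (mod 2)`. -/
theorem chi_congr_semichar_mod_two (χ χ₂ : ℤ)
    {V : Type*} [AddCommGroup V] [Module (ZMod 2) V]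
    [FiniteDimensional (ZMod 2) V]
    (B : V →ₗ[ZMod 2] V →ₗ[ZMod 2] ZMod 2)
    (hsymm : ∀ x y : V, B x y = B y x)
    (halt : ∀ x : V, B x x = 0)
    (hnondeg : ∀ x : V, (∀ y : V, B x y = 0) → x = 0)
    (hparity : χ ≡ (Module.finrank (ZMod 2) V : ℤ) + χ₂ [ZMOD 2]) :
    χ ≡ χ₂ [ZMOD 2] :=
  chi_congr_semichar_mod_two_general χ χ₂ B halt hnondeg hparity
end

section
/- The map f : S⁷ → S⁷ given by f(u) = u², where S⁷ is the unit sphere in the octonions, has degree 2. -/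
open Quaternion

/-- Octonion multiplication, via the Cayley–Dickson construction on `ℍ × ℍ`. -/
noncomputable def octMul (x y : ℍ[ℝ] × ℍ[ℝ]) : ℍ[ℝ] × ℍ[ℝ] :=
  (x.1 * y.1 - star y.2 * x.2, y.2 * x.1 + x.2 * star y.1)

/-- The unit sphere `S⁷` of the octonions `𝕆 = ℍ × ℍ` (with the octonion norm
`‖(a,b)‖² = ‖a‖² + ‖b‖²`). -/
def OctSphere : Set (ℍ[ℝ] × ℍ[ℝ]) := {x | ‖x.1‖ ^ 2 + ‖x.2‖ ^ 2 = 1}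

/-- The standard degree-two self-map of `S⁷`: in the complex coordinate
`z = re + i·imI` of the first quaternion component it is the (6-fold
suspension of the) squaring map `z ↦ z²/|z|` of the circle, and it is the
identity in all remaining coordinates. -/
noncomputable def octModelDeg2 (x : ℍ[ℝ] × ℍ[ℝ]) : ℍ[ℝ] × ℍ[ℝ] :=
  let z : ℂ := ⟨x.1.re, x.1.imI⟩
  let w : ℂ := z ^ 2 / (‖z‖ : ℂ)
  (⟨w.re, w.im, x.1.imJ, x.1.imK⟩, x.2)

/-!
In complex coordinates `u = (z, w) ∈ ℂ × ℂ³`, where `z` collects the `1, i` components of `u`,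
the octonion square is `(z² - ‖w‖², 2 Re z • w)` and the model map is `(z² / |z|, w)`.
Interpolating linearly between the two would vanish where the coefficient of `w`, moving from
`2 Re z` to `1`, crosses zero; pushing that coefficient off the real axis by `i t (1 - t)` gives a
nowhere-vanishing interpolation on the sphere, and its radial projection is the homotopy.
-/

open Complex Metric WithLp

section SphereHomotopy

variable {X E : Type*} [TopologicalSpace X] [NormedAddCommGroup E] [NormedSpace ℝ E]

theorem ContinuousMap.homotopic_of_ne_zero {f₀ f₁ : C(X, sphere (0 : E) 1)}
    (H : C(unitInterval × X, E))
    (hH : ∀ p, H p ≠ 0) (h₀ : ∀ x, H (0, x) = f₀ x) (h₁ : ∀ x, H (1, x) = f₁ x) :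
    f₀.Homotopic f₁ :=
  ⟨{ toFun p := ⟨‖H p‖⁻¹ • H p, by simp [norm_smul, hH p]⟩
     continuous_toFun := by
       have hnorm := H.continuous.norm.inv₀ fun p => norm_ne_zero_iff.mpr (hH p)
       exact (hnorm.smul H.continuous).subtype_mk _
     map_zero_left x := by ext1; simp [h₀]
     map_one_left x := by ext1; simp [h₁] }⟩

end SphereHomotopy

theorem Complex.norm_sq_div_norm (z : ℂ) : ‖z ^ 2 / (‖z‖ : ℂ)‖ = ‖z‖ := by
  rw [norm_div, norm_pow, norm_real, norm_norm, sq, mul_self_div_self]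

@[fun_prop]
theorem Continuous.sq_div_norm {α : Type*} [TopologicalSpace α] {f : α → ℂ} (hf : Continuous f) :
    Continuous fun x => f x ^ 2 / (‖f x‖ : ℂ) := by
  suffices Continuous fun z : ℂ => z ^ 2 / (‖z‖ : ℂ) from this.comp hf
  refine continuous_iff_continuousAt.mpr fun z => ?_
  rcases eq_or_ne z 0 with rfl | hz
  · have := squeeze_zero_norm (fun z => (norm_sq_div_norm z).le) tendsto_norm_zero
    simpa [ContinuousAt] using this
  · exact (continuousAt_id.pow 2).div (by fun_prop) (by simpa using hz)

noncomputable section ComplexSphere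

variable {W : Type*} [NormedAddCommGroup W] [NormedSpace ℂ W]

def squareMap (v : ℂ × W) : ℂ × W :=
  (v.1 ^ 2 - (‖v.2‖ ^ 2 : ℝ), (2 * v.1.re : ℂ) • v.2)

def modelMap (v : ℂ × W) : ℂ × W :=
  (v.1 ^ 2 / (‖v.1‖ : ℂ), v.2)

def squaringHomotopy (t : ℝ) (v : ℂ × W) : ℂ × W :=
  ((1 - t) * (v.1 ^ 2 - (‖v.2‖ ^ 2 : ℝ)) + t * (v.1 ^ 2 / (‖v.1‖ : ℂ)),
    ((1 - t) * (2 * v.1.re) + t + t * (1 - t) * Complex.I) • v.2)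

theorem squaringHomotopy_zero : squaringHomotopy 0 = squareMap (W := W) := by
  ext1 v; simp [squaringHomotopy, squareMap]

theorem squaringHomotopy_one : squaringHomotopy 1 = modelMap (W := W) := by
  ext1 v; simp [squaringHomotopy, modelMap]

theorem continuous_squaringHomotopy :
    Continuous fun p : ℝ × (ℂ × W) => squaringHomotopy p.1 p.2 := by
  unfold squaringHomotopy; fun_prop

theorem squaringHomotopy_ne_zero {t : ℝ} (ht : t ∈ unitInterval) {v : ℂ × W} (hv : v ≠ 0) :
    squaringHomotopy t v ≠ 0 := by
  obtain ⟨z, w⟩ := v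
  obtain ⟨ht₀, ht₁⟩ := ht
  intro h
  simp only [squaringHomotopy, Prod.mk_eq_zero, smul_eq_zero] at h
  obtain ⟨hz, hc | rfl⟩ := h
  · have him : t * (1 - t) = 0 := by simpa using congrArg Complex.im hc
    have hre : (1 - t) * (2 * z.re) + t = 0 := by simpa using congrArg Complex.re hc
    obtain rfl : t = 0 := by
      rcases mul_eq_zero.mp him with h | h
      · exact h
      · obtain rfl : t = 1 := by linarith
        norm_num at hre
    have hzre : z.re = 0 := by linarith
    have hsum : -(z.im * z.im) - ‖w‖ * ‖w‖ = 0 := by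
      simpa [sq, hzre] using congrArg Complex.re hz
    have hw : ‖w‖ = 0 := by nlinarith [sq_nonneg z.im, sq_nonneg ‖w‖]
    have hzim : z.im = 0 := by nlinarith [sq_nonneg z.im, sq_nonneg ‖w‖]
    exact hv (Prod.ext (Complex.ext hzre hzim) (norm_eq_zero.mp hw))
  · rw [norm_zero] at hz
    have hz0 : z ≠ 0 := fun h => hv (by simp [h])
    have hcoef : 0 < 1 - t + t / ‖z‖ := by
      rcases ht₁.lt_or_eq with h | rfl
      · have := div_nonneg ht₀ (norm_nonneg z)
        linarith
      · simpa using hz0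
    have : ((1 - t + t / ‖z‖ : ℝ) : ℂ) * z ^ 2 = 0 := by
      rw [← hz]; push_cast; ring
    rcases mul_eq_zero.mp this with h | h
    · exact hcoef.ne' (mod_cast h)
    · exact hz0 (pow_eq_zero_iff two_ne_zero |>.mp h)

theorem homotopic_of_eq_squareMap_of_eq_modelMap {X : Type*} [TopologicalSpace X]
    (φ f g : C(X, sphere (0 : WithLp 2 (ℂ × W)) 1))
    (hf : ∀ x, ofLp (f x : WithLp 2 (ℂ × W)) = squareMap (ofLp (φ x : WithLp 2 (ℂ × W))))
    (hg : ∀ x, ofLp (g x : WithLp 2 (ℂ × W)) = modelMap (ofLp (φ x : WithLp 2 (ℂ × W)))) :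
    f.Homotopic g := by
  refine ContinuousMap.homotopic_of_ne_zero
    ⟨fun p => toLp 2 (squaringHomotopy p.1 (ofLp (φ p.2 : WithLp 2 (ℂ × W)))), ?_⟩
    (fun p => ?_) (fun x => ?_) (fun x => ?_)
  · have hK := continuous_squaringHomotopy (W := W)
    fun_prop
  · refine (WithLp.toLp_eq_zero 2).not.mpr (squaringHomotopy_ne_zero p.1.2 ?_)
    exact (WithLp.ofLp_eq_zero 2).not.mpr (ne_zero_of_mem_unit_sphere _)
  · simp [squaringHomotopy_zero, ← hf]
  · simp [squaringHomotopy_one, ← hg]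

end ComplexSphere

noncomputable section OctonionCoordinates

@[simps apply]
def octComplexCoords : (ℍ[ℝ] × ℍ[ℝ]) ≃ₗ[ℝ] WithLp 2 (ℂ × EuclideanSpace ℂ (Fin 3)) where
  toFun u :=
    toLp 2 (⟨u.1.re, u.1.imI⟩, !₂[⟨u.1.imJ, u.1.imK⟩, ⟨u.2.re, u.2.imI⟩, ⟨u.2.imJ, u.2.imK⟩])
  invFun v := (⟨v.fst.re, v.fst.im, (v.snd 0).re, (v.snd 0).im⟩,
    ⟨(v.snd 1).re, (v.snd 1).im, (v.snd 2).re, (v.snd 2).im⟩)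
  map_add' u u' := by
    refine ofLp_injective 2 (Prod.ext ?_ (PiLp.ext fun i => ?_))
    all_goals (try fin_cases i) <;> apply Complex.ext <;> simp
  map_smul' c u := by
    refine ofLp_injective 2 (Prod.ext ?_ (PiLp.ext fun i => ?_))
    all_goals (try fin_cases i) <;> apply Complex.ext <;> simp
  left_inv u := rfl
  right_inv v := by
    refine ofLp_injective 2 (Prod.ext rfl (PiLp.ext fun i => ?_))
    fin_cases i <;> rfl

theorem Quaternion.sq_norm (a : ℍ[ℝ]) : ‖a‖ ^ 2 = normSq a := by
  rw [sq, normSq_eq_norm_mul_self]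

theorem sq_norm_octComplexCoords (u : ℍ[ℝ] × ℍ[ℝ]) :
    ‖octComplexCoords u‖ ^ 2 = ‖u.1‖ ^ 2 + ‖u.2‖ ^ 2 := by
  simp [prod_norm_sq_eq_of_L2, EuclideanSpace.norm_sq_eq, Fin.sum_univ_three,
    Complex.sq_norm, Complex.normSq_apply, Quaternion.sq_norm, normSq_def']
  ring

theorem octComplexCoords_octMul_self (u : ℍ[ℝ] × ℍ[ℝ]) :
    ofLp (octComplexCoords (octMul u u)) = squareMap (ofLp (octComplexCoords u)) := by
  refine Prod.ext ?_ (PiLp.ext fun i => ?_)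
  all_goals (try fin_cases i) <;> apply Complex.ext <;>
    simp [octMul, squareMap, EuclideanSpace.norm_sq_eq, Fin.sum_univ_three, Complex.sq_norm,
      Complex.normSq_apply, pow_two (_ : ℂ)] <;> ring

theorem octComplexCoords_octModelDeg2 (u : ℍ[ℝ] × ℍ[ℝ]) :
    ofLp (octComplexCoords (octModelDeg2 u)) = modelMap (ofLp (octComplexCoords u)) := by
  refine Prod.ext ?_ (PiLp.ext fun i => ?_)
  all_goals (try fin_cases i) <;> apply Complex.ext <;>
    simp [octModelDeg2, modelMap]

def octSphereHomeomorph : OctSphere ≃ₜ sphere (0 : WithLp 2 (ℂ × EuclideanSpace ℂ (Fin 3))) 1 :=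
  octComplexCoords.toContinuousLinearEquiv.toHomeomorph.subtype fun u => by
    rw [mem_sphere_zero_iff_norm, ← pow_eq_one_iff_of_nonneg (norm_nonneg _) two_ne_zero]
    exact (sq_norm_octComplexCoords u).symm ▸ Iff.rfl

end OctonionCoordinates

/-- Degree two in the sense of Hopf's theorem: homotopic to the standard degree-two map. -/
theorem octonion_squaring_has_degree_two
    (f g : C(OctSphere, OctSphere))
    (hf : ∀ x : OctSphere, (f x : ℍ[ℝ] × ℍ[ℝ]) = octMul x x)
    (hg : ∀ x : OctSphere, (g x : ℍ[ℝ] × ℍ[ℝ]) = octModelDeg2 x) :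
    f.Homotopic g := by
  let e : C(OctSphere, sphere (0 : WithLp 2 (ℂ × EuclideanSpace ℂ (Fin 3))) 1) :=
    octSphereHomeomorph
  have h : (e.comp f).Homotopic (e.comp g) := by
    refine homotopic_of_eq_squareMap_of_eq_modelMap e _ _ (fun x => ?_) (fun x => ?_)
    · change ofLp (octComplexCoords (f x)) = squareMap (ofLp (octComplexCoords x))
      rw [hf, octComplexCoords_octMul_self]
    · change ofLp (octComplexCoords (g x)) = modelMap (ofLp (octComplexCoords x))
      rw [hg, octComplexCoords_octModelDeg2]
  simpa [← ContinuousMap.comp_assoc, e] using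
    (ContinuousMap.Homotopic.refl (octSphereHomeomorph.symm : C(_, OctSphere))).comp h
end

section
/- Let H be a finite abelian group with a symmetric bilinear form b : H × H → ℚ/ℤ, let d be an even positive integer, and fix k. Define P(F) = d²·b(t,t) − 2d·b(p − d·k, t) mod 2d, where t = F(k) − k, for automorphisms F of the ambient group preserving b and p. Then P(F₁∘F₀) ≡ P(F₀) + P(F₁) mod 2d whenever F₀, F₁ fix p and preserve b; i.e. P is a homomorphism to ℤ/2d on the subgroup of automorphisms acting trivially enough. -/
/-!
Put `t₀ = F₀ k - k`, `t₁ = F₁ k - k`, `q = p - d • k` and `s = k - F₁⁻¹ k`. Then `F₁ s = t₁`, the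
displacement of `F₁ ∘ F₀` is `F₁ (t₀ + s)`, and, as `F₁` fixes `p`, `F₁⁻¹ q = q + d • s`.
Expanding with the `F₁`-invariance of `b` modulo `ℤ`, the self-linking term of `F₁ ∘ F₀` picks up
`2 b(t₀, s)` and the term against `q` picks up `d b(s, t₀)`; after multiplying by `d²` and `-2d`
these cancel. The integer ambiguities turn into multiples of `d²` and of `2d`, and `2d ∣ d²`
because `d` is even.
-/

open AddCommGroup

section ModEq

variable {R : Type*} [Ring R]

lemma modEq_iff_exists_eq_add_mul_intCast {a b p : R} :
    a ≡ b [PMOD p] ↔ ∃ n : ℤ, b = a + p * n := by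
  simp only [modEq_iff_eq_add_zsmul, zsmul_eq_mul, Int.cast_comm]

lemma AddCommGroup.ModEq.intCast_mul_of_modEq_one {x y : R} (h : x ≡ y [PMOD 1]) (c : ℤ) :
    (c : R) * x ≡ c * y [PMOD (c : R)] := by
  simpa only [zsmul_eq_mul, mul_one] using h.zsmul (z := c)

lemma AddCommGroup.ModEq.of_intCast_dvd {a b : R} {m n : ℤ} (hmn : m ∣ n)
    (h : a ≡ b [PMOD (n : R)]) : a ≡ b [PMOD (m : R)] := by
  obtain ⟨c, rfl⟩ := hmn
  refine ModEq.of_zsmul (z := c) ?_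
  rwa [zsmul_eq_mul, ← Int.cast_mul, mul_comm]

end ModEq

section QuasiBilinear

variable {A : Type*} [AddCommGroup A] {b : A → A → ℚ}

def leftModOne (hadd : ∀ x y z, b (x + y) z ≡ b x z + b y z [PMOD 1]) (z : A) :
    A →+ ℚ ⧸ AddSubgroup.zmultiples (1 : ℚ) :=
  AddMonoidHom.mk' (fun x => (b x z : ℚ ⧸ _)) fun x y => by
    rw [← QuotientAddGroup.mk_add, ← modEq_iff_eq_mod_zmultiples]
    exact hadd x y z

lemma zsmul_left_modEq_one (hadd : ∀ x y z, b (x + y) z ≡ b x z + b y z [PMOD 1])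
    (n : ℤ) (x z : A) : b (n • x) z ≡ n * b x z [PMOD 1] := by
  rw [modEq_iff_eq_mod_zmultiples, ← zsmul_eq_mul, QuotientAddGroup.mk_zsmul]
  exact map_zsmul (leftModOne hadd z) n x

lemma add_right_modEq_one (hsymm : ∀ x y, b x y = b y x)
    (hadd : ∀ x y z, b (x + y) z ≡ b x z + b y z [PMOD 1]) (x y z : A) :
    b x (y + z) ≡ b x y + b x z [PMOD 1] := by
  simpa only [hsymm x] using hadd y z x

lemma add_self_modEq_one (hsymm : ∀ x y, b x y = b y x)
    (hadd : ∀ x y z, b (x + y) z ≡ b x z + b y z [PMOD 1]) (x y : A) :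
    b (x + y) (x + y) ≡ b x x + 2 * b x y + b y y [PMOD 1] := by
  refine (hadd x y _).trans ?_
  refine ((add_right_modEq_one hsymm hadd x x y).add
    (add_right_modEq_one hsymm hadd y x y)).trans ?_
  rw [hsymm y x]
  convert modEq_rfl using 1
  ring

end QuasiBilinear

/-- The paper's `P(F)`, computed with a rational lift `b` of the linking form; only its class
modulo `2d` is meaningful. -/
def linkingDefect {A : Type*} [AddCommGroup A] (b : A → A → ℚ) (d : ℤ) (p k : A)
    (F : A ≃+ A) : ℚ :=
  (d : ℚ) ^ 2 * b (F k - k) (F k - k) - 2 * d * b (p - d • k) (F k - k)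

section Defect

variable {A : Type*} [AddCommGroup A] {b : A → A → ℚ} {d : ℤ} {p k : A}

lemma linkingDefect_trans (hsymm : ∀ x y, b x y = b y x)
    (hadd : ∀ x y z, b (x + y) z ≡ b x z + b y z [PMOD 1]) (hd : Even d)
    (F₀ F₁ : A ≃+ A) (hF₁p : F₁ p = p)
    (hF₁b : ∀ x y, b (F₁ x) (F₁ y) ≡ b x y [PMOD 1]) :
    linkingDefect b d p k (F₀.trans F₁) ≡
      linkingDefect b d p k F₀ + linkingDefect b d p k F₁ [PMOD 2 * (d : ℚ)] := by
  set t₀ := F₀ k - k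
  set t₁ := F₁ k - k
  set q := p - d • k
  set s := k - F₁.symm k
  have hs : F₁ s = t₁ := by simp [s, t₁]
  have ht : (F₀.trans F₁) k - k = F₁ (t₀ + s) := by
    simp only [AddEquiv.trans_apply, map_add, map_sub, AddEquiv.apply_symm_apply, t₀, s]
    abel
  have hq : F₁ (q + d • s) = q := by
    simp only [map_add, map_zsmul, hs, map_sub, hF₁p, smul_sub, t₁, q]
    abel
  have hself : b (F₁ (t₀ + s)) (F₁ (t₀ + s)) ≡ b t₀ t₀ + 2 * b s t₀ + b t₁ t₁ [PMOD 1] := by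
    refine (hF₁b _ _).trans ((add_self_modEq_one hsymm hadd t₀ s).trans ?_)
    rw [hsymm t₀ s, ← hs]
    exact (modEq_refl _).add (hF₁b s s).symm
  have hcross : b q (F₁ (t₀ + s)) ≡ b q t₀ + d * b s t₀ + b q t₁ [PMOD 1] := by
    rw [map_add, hs]
    refine (add_right_modEq_one hsymm hadd _ _ _).trans (ModEq.add_right _ ?_)
    calc b q (F₁ t₀) = b (F₁ (q + d • s)) (F₁ t₀) := by rw [hq]
      _ ≡ b q t₀ + b (d • s) t₀ [PMOD 1] := (hF₁b _ _).trans (hadd _ _ _)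
      _ ≡ b q t₀ + d * b s t₀ [PMOD 1] := (zsmul_left_modEq_one hadd d s t₀).add_left _
  have h2d_dvd : 2 * d ∣ d ^ 2 := by
    obtain ⟨e, rfl⟩ := hd
    exact ⟨e, by ring⟩
  calc linkingDefect b d p k (F₀.trans F₁)
      = (d : ℚ) ^ 2 * b (F₁ (t₀ + s)) (F₁ (t₀ + s)) - 2 * d * b q (F₁ (t₀ + s)) := by
        rw [linkingDefect, ht]
    _ ≡ (d : ℚ) ^ 2 * (b t₀ t₀ + 2 * b s t₀ + b t₁ t₁)
          - 2 * d * (b q t₀ + d * b s t₀ + b q t₁) [PMOD 2 * (d : ℚ)] := by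
        have h := ((hself.intCast_mul_of_modEq_one _).of_intCast_dvd h2d_dvd).sub
          (hcross.intCast_mul_of_modEq_one (2 * d))
        push_cast at h
        exact h
    _ = linkingDefect b d p k F₀ + linkingDefect b d p k F₁ := by
        simp only [linkingDefect]
        ring

end Defect

theorem P_additive_under_composition_general
    {A : Type*} [AddCommGroup A] (b : A → A → ℚ)
    (hsymm : ∀ x y : A, b x y = b y x)
    (hbil : ∀ x y z : A, ∃ n : ℤ, b (x + y) z = b x z + b y z + n)
    (d : ℤ) (hde : Even d) (p k : A)
    (F₀ F₁ : A ≃+ A)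
    (hF₁p : F₁ p = p)
    (hF₁b : ∀ x y : A, ∃ n : ℤ, b (F₁ x) (F₁ y) = b x y + n) :
    ∃ n : ℤ,
      ((d : ℚ) ^ 2 * b (F₁ (F₀ k) - k) (F₁ (F₀ k) - k)
          - 2 * d * b (p - d • k) (F₁ (F₀ k) - k))
        = ((d : ℚ) ^ 2 * b (F₀ k - k) (F₀ k - k)
            - 2 * d * b (p - d • k) (F₀ k - k))
          + ((d : ℚ) ^ 2 * b (F₁ k - k) (F₁ k - k)
              - 2 * d * b (p - d • k) (F₁ k - k))
          + 2 * d * n := by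
  have hadd (x y z : A) : b (x + y) z ≡ b x z + b y z [PMOD 1] :=
    (modEq_iff_exists_eq_add_mul_intCast.2 (by simpa using hbil x y z)).symm
  have hF₁b' (x y : A) : b (F₁ x) (F₁ y) ≡ b x y [PMOD 1] :=
    (modEq_iff_exists_eq_add_mul_intCast.2 (by simpa using hF₁b x y)).symm
  exact modEq_iff_exists_eq_add_mul_intCast.1
    (linkingDefect_trans (k := k) hsymm hadd hde F₀ F₁ hF₁p hF₁b').symm

/-- Abstraction of the function `P` of §6.3. `A` is the ambient group
(`H⁴(M)`), `b` is (a rational lift of) the `ℚ/ℤ`-valued torsion linking form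
(bilinear and symmetric modulo `ℤ`, and preserved modulo `ℤ` by the
automorphisms), `d` is the even positive integer `d_π`, `p = p_M`, and
`k ∈ S_{d_π}` (so `p − d·k` is torsion).  With `t = F(k) − k` and
`P(F) = d²·b(t,t) − 2d·b(p − dk, t) mod 2d`, the function `P` is additive
under composition: `P(F₁ ∘ F₀) ≡ P(F₀) + P(F₁) (mod 2d)`. -/
theorem P_additive_under_composition
    {A : Type*} [AddCommGroup A] (b : A → A → ℚ)
    (hsymm : ∀ x y : A, b x y = b y x)
    (hbil : ∀ x y z : A, ∃ n : ℤ, b (x + y) z = b x z + b y z + n)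
    (d : ℤ) (hd : 0 < d) (hde : Even d) (p k : A)
    (hk : ∃ n : ℤ, n ≠ 0 ∧ n • (p - d • k) = 0)
    (F₀ F₁ : A ≃+ A)
    (hF₀p : F₀ p = p) (hF₁p : F₁ p = p)
    (hF₀b : ∀ x y : A, ∃ n : ℤ, b (F₀ x) (F₀ y) = b x y + n)
    (hF₁b : ∀ x y : A, ∃ n : ℤ, b (F₁ x) (F₁ y) = b x y + n) :
    ∃ n : ℤ,
      ((d : ℚ) ^ 2 * b (F₁ (F₀ k) - k) (F₁ (F₀ k) - k)
          - 2 * d * b (p - d • k) (F₁ (F₀ k) - k))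
        = ((d : ℚ) ^ 2 * b (F₀ k - k) (F₀ k - k)
            - 2 * d * b (p - d • k) (F₀ k - k))
          + ((d : ℚ) ^ 2 * b (F₁ k - k) (F₁ k - k)
              - 2 * d * b (p - d • k) (F₁ k - k))
          + 2 * d * n :=
  P_additive_under_composition_general b hsymm hbil d hde p k F₀ F₁ hF₁p hF₁b
end
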